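/- arXiv:2101.10686 — 2 statements merged into one kernel-verified Lean document; each statement's English description precedes it below -/
import Mathlib

section
/- For every real number t with |t| < 1, one has the convergent expansion Γ(2, arcsinh t) = 1 − t²/2 + t³/3 − (1/4) Σ_{k=3}^∞ Q(2, k−1; 3) (2t)^{k+1}/(k+1)!, where Γ(a, x) = ∫_x^∞ e^{−u} u^{a−1} du is the upper incomplete gamma function and arcsinh t = ln(t + √(1+t²)) is the inverse hyperbolic sine. -/
/-!
Since `Γ(2, x) = (1 + x) e^{-x}` and `e^{-arsinh t} = √(1+t²) - t`, the left side is
`(1 + a)(s - t)` with `a = arsinh t` and `s = √(1+t²)`.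

`Q(2, K; 3)` is the derivative of the falling factorial `x(x-1)⋯(x-K)` at `x = (K-1)/2`. For
`K = 2m` that point is the centre of symmetry of the first `2m` roots, so the derivative reduces to
the value of `x(x-1)⋯(x-2m+1)` there, `(-1/2 choose m) (2m)! / 4^m`; for `K = 2j+3` it is the
root `j + 1`, where the derivative is `(-1)^j (j+1)! (j+2)!`. Hence the even-indexed terms of
the series are the Taylor terms of `4(t a - s + 1)` from `t⁴` on (binomial series of
`(1+t²)^{±1/2}`, integrated termwise for `arsinh`), and the odd-indexed ones come from the Taylor
coefficients `(-4)^n n!² / (2n+1)!` of `a / s`, identified through the ODE `(1+t²) y' + t y = 1`.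
As `(1+t²) a / s = a s`, the two parts add up to `4(1 - t²/2 + t³/3) - 4(1 + a)(s - t)`.
-/

/-- Signed Stirling numbers of the first kind: coefficients of the falling factorial,
`x(x-1)⋯(x-n+1) = ∑ₖ s(n,k) xᵏ`. -/
def stirlingFirst : ℕ → ℕ → ℤ
  | 0, 0 => 1
  | 0, _ + 1 => 0
  | n + 1, 0 => -(n : ℤ) * stirlingFirst n 0
  | n + 1, k + 1 => stirlingFirst n k - (n : ℤ) * stirlingFirst n (k + 1)

/-- `Q m k α = ∑_{ℓ=0}^{k} C(m+ℓ−1, m−1) · s(m+k−1, m+ℓ−1) · ((m+k−α)/2)^ℓ`. -/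
noncomputable def Q (m k : ℕ) (α : ℝ) : ℝ :=
  ∑ ℓ ∈ Finset.range (k + 1),
    ((m + ℓ - 1).choose (m - 1) : ℝ) * (stirlingFirst (m + k - 1) (m + ℓ - 1) : ℝ) *
      (((m : ℝ) + (k : ℝ) - α) / 2) ^ ℓ

/-- The upper incomplete gamma function `Γ(a, x) = ∫_x^∞ e^{−u} u^{a−1} du`
(for a positive integer value of the parameter `a`). -/
noncomputable def incGamma (a : ℕ) (x : ℝ) : ℝ :=
  ∫ u in Set.Ioi x, Real.exp (-u) * u ^ (a - 1)

open Real Finset Polynomial Filter Topology MeasureTheory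
open scoped Nat

lemma hasDerivAt_neg_one_add_mul_exp_neg (u : ℝ) :
    HasDerivAt (fun u : ℝ => -(1 + u) * exp (-u)) (exp (-u) * u) u := by
  have h : HasDerivAt (fun u : ℝ => -(1 + u)) (-1) u := ((hasDerivAt_id u).const_add 1).neg
  exact (h.mul (hasDerivAt_neg u).exp).congr_deriv (by ring)

lemma tendsto_neg_one_add_mul_exp_neg :
    Tendsto (fun u : ℝ => -(1 + u) * exp (-u)) atTop (𝓝 0) := by
  have h := (tendsto_exp_neg_atTop_nhds_zero.add (tendsto_pow_mul_exp_neg_atTop_nhds_zero 1)).neg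
  simp only [add_zero, neg_zero, pow_one] at h
  exact h.congr fun u => by ring

lemma integrableOn_exp_neg_mul_Ioi (x : ℝ) :
    IntegrableOn (fun u : ℝ => exp (-u) * u) (Set.Ioi x) := by
  have hpos : IntegrableOn (fun u : ℝ => exp (-u) * u) (Set.Ioi 0) :=
    integrableOn_Ioi_deriv_of_nonneg
      (hasDerivAt_neg_one_add_mul_exp_neg 0).continuousAt.continuousWithinAt
      (fun u _ => hasDerivAt_neg_one_add_mul_exp_neg u)
      (fun u hu => mul_nonneg (exp_pos _).le (le_of_lt hu)) tendsto_neg_one_add_mul_exp_neg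
  have hbounded : IntegrableOn (fun u : ℝ => exp (-u) * u) (Set.Ioc x 0) :=
    (by fun_prop : Continuous fun u : ℝ => exp (-u) * u).integrableOn_Ioc
  exact (hbounded.union hpos).mono_set fun u hu => (le_or_gt u 0).imp (fun h => ⟨hu, h⟩) id

lemma incGamma_two_eq (x : ℝ) : incGamma 2 x = (1 + x) * exp (-x) := by
  have h := integral_Ioi_of_hasDerivAt_of_tendsto
    (hasDerivAt_neg_one_add_mul_exp_neg x).continuousAt.continuousWithinAt
    (fun u _ => hasDerivAt_neg_one_add_mul_exp_neg u) (integrableOn_exp_neg_mul_Ioi x)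
    tendsto_neg_one_add_mul_exp_neg
  simp only [incGamma, Nat.add_one_sub_one, pow_one, h]
  ring

lemma exp_neg_arsinh (t : ℝ) : exp (-arsinh t) = √(1 + t ^ 2) - t := by
  rw [← arsinh_neg, exp_arsinh, neg_sq]
  ring

lemma coeff_descPochhammer (n k : ℕ) :
    (descPochhammer ℝ n).coeff k = stirlingFirst n k := by
  induction n generalizing k with
  | zero => cases k <;> simp [stirlingFirst, coeff_one]
  | succ n ih =>
    rw [descPochhammer_succ_right, ← C_eq_natCast]
    cases k with
    | zero => simp [stirlingFirst, ih, mul_comm]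
    | succ k =>
      rw [coeff_mul_X_sub_C, ih, ih, stirlingFirst]
      push_cast
      ring

lemma Q_two_eq_eval_derivative (K : ℕ) :
    Q 2 K 3 = (derivative (descPochhammer ℝ (K + 1))).eval (((K : ℝ) - 1) / 2) := by
  have hdeg : (derivative (descPochhammer ℝ (K + 1))).natDegree < K + 1 := by
    have := natDegree_derivative_le (descPochhammer ℝ (K + 1))
    rw [descPochhammer_natDegree] at this
    omega
  rw [eval_eq_sum_range' hdeg, Q]
  refine sum_congr rfl fun l _ => ?_
  rw [coeff_derivative, coeff_descPochhammer, show 2 + l - 1 = l + 1 by omega,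
    show 2 + K - 1 = K + 1 by omega, Nat.choose_one_right]
  push_cast
  ring

lemma descPochhammer_eval_reflect {R : Type*} [CommRing R] (n : ℕ) (x : R) :
    (descPochhammer R n).eval (n - 1 - x) = (-1) ^ n * (descPochhammer R n).eval x := by
  rw [descPochhammer_eval_eq_ascPochhammer, ← ascPochhammer_eval_neg_eq_descPochhammer]
  ring_nf

lemma HasDerivAt.eq_zero_of_symmetric {f : ℝ → ℝ} {f' c : ℝ} (hf : HasDerivAt f f' c)
    (hsymm : ∀ x, f (2 * c - x) = f x) : f' = 0 := by
  have hreflect : HasDerivAt f (-f') c := by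
    have hf' : HasDerivAt f f' (2 * c - c) := by rwa [two_mul, add_sub_cancel_right]
    have h := hf'.comp c ((hasDerivAt_id c).const_sub (2 * c))
    rw [show f ∘ HSub.hSub (2 * c) = f from funext hsymm] at h
    simpa using h
  linarith [hf.unique hreflect]

lemma eval_derivative_mul_X_sub_C_mul {R : Type*} [CommRing R] (p q : R[X]) (a : R) :
    (derivative (p * (X - C a) * q)).eval a = p.eval a * q.eval a := by
  simp [derivative_mul]

lemma eval_derivative_descPochhammer_two_mul_add_one (m : ℕ) :
    (derivative (descPochhammer ℝ (2 * m + 1))).eval ((m : ℝ) - 1 / 2) =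
      (descPochhammer ℝ (2 * m)).eval ((m : ℝ) - 1 / 2) := by
  have hcenter : (derivative (descPochhammer ℝ (2 * m))).eval ((m : ℝ) - 1 / 2) = 0 := by
    refine (descPochhammer ℝ (2 * m)).hasDerivAt _ |>.eq_zero_of_symmetric fun x => ?_
    have h := descPochhammer_eval_reflect (R := ℝ) (2 * m) x
    rw [pow_mul, neg_one_sq, one_pow, one_mul] at h
    rw [← h]
    push_cast
    ring_nf
  rw [descPochhammer_succ_right, derivative_mul, eval_add, eval_mul, eval_mul, hcenter]
  simp

lemma eval_derivative_descPochhammer_two_mul_add_four (j : ℕ) :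
    (derivative (descPochhammer ℝ (2 * j + 4))).eval ((j : ℝ) + 1) =
      (-1) ^ j * (j + 1)! * (j + 2)! := by
  have hsplit : descPochhammer ℝ (2 * j + 4) =
      descPochhammer ℝ (j + 1) * (X - C ((j : ℝ) + 1)) *
        (descPochhammer ℝ (j + 2)).comp (X - C ((j : ℝ) + 2)) := by
    rw [show 2 * j + 4 = (j + 1) + (j + 3) by ring, ← descPochhammer_mul,
      descPochhammer_succ_left (R := ℝ) (j + 2), mul_comp, X_comp, comp_assoc, mul_assoc]
    congr 3
    · simp
    · simp only [sub_comp, X_comp, one_comp, map_add, map_natCast, map_ofNat]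
      push_cast
      ring
  have hleft : (descPochhammer ℝ (j + 1)).eval ((j : ℝ) + 1) = (j + 1)! := by
    rw [← Nat.cast_succ, descPochhammer_eval_eq_descFactorial, Nat.descFactorial_self]
  have hright : (descPochhammer ℝ (j + 2)).eval (-1) = (-1) ^ j * (j + 2)! := by
    rw [descPochhammer_eval_eq_ascPochhammer,
      show (-1 : ℝ) - (j + 2 : ℕ) + 1 = -(j + 2 : ℕ) by push_cast; ring,
      ascPochhammer_eval_neg_eq_descPochhammer,
      descPochhammer_eval_eq_descFactorial, Nat.descFactorial_self]
    ring
  rw [hsplit, eval_derivative_mul_X_sub_C_mul, eval_comp, eval_sub, eval_X, eval_C,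
    show (j : ℝ) + 1 - (j + 2) = -1 by ring, hleft, hright]
  ring

lemma succ_mul_choose_succ_eq_mul_choose_sub_one (a : ℝ) (n : ℕ) :
    (n + 1 : ℝ) * Ring.choose a (n + 1) = a * Ring.choose (a - 1) n := by
  simpa [Ring.choose_one_right] using Ring.choose_smul_choose a (Nat.le_add_left 1 n)

lemma succ_mul_choose_succ (a : ℝ) (n : ℕ) :
    (n + 1 : ℝ) * Ring.choose a (n + 1) = (a - n) * Ring.choose a n := by
  have hpascal := Ring.choose_succ_succ a n
  have habsorb := succ_mul_choose_succ_eq_mul_choose_sub_one (a + 1) n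
  rw [add_sub_cancel_right] at habsorb
  linear_combination habsorb - (n + 1 : ℝ) * hpascal

lemma choose_neg_half_succ (n : ℕ) :
    Ring.choose (-(1 / 2) : ℝ) (n + 1) =
      -((2 * n + 1) / (2 * n + 2)) * Ring.choose (-(1 / 2)) n := by
  have h := succ_mul_choose_succ (-(1 / 2)) n
  field_simp
  linear_combination 2 * h

lemma choose_half_succ (n : ℕ) :
    Ring.choose (1 / 2 : ℝ) (n + 1) = Ring.choose (-(1 / 2)) n / (2 * n + 2) := by
  have h := succ_mul_choose_succ_eq_mul_choose_sub_one (1 / 2) n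
  rw [show (1 / 2 : ℝ) - 1 = -(1 / 2) by norm_num] at h
  field_simp
  linear_combination 2 * h

lemma abs_choose_neg_half_le_one (n : ℕ) : |Ring.choose (-(1 / 2) : ℝ) n| ≤ 1 := by
  induction n with
  | zero => simp
  | succ n ih =>
    rw [choose_neg_half_succ, abs_mul, abs_neg, abs_of_nonneg (by positivity)]
    have hratio : (2 * n + 1 : ℝ) / (2 * n + 2) ≤ 1 := by
      rw [div_le_one (by positivity)]
      linarith
    nlinarith [abs_nonneg (Ring.choose (-(1 / 2) : ℝ) n)]

lemma descPochhammer_eval_two_mul_sub_half (m : ℕ) :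
    (descPochhammer ℝ (2 * m)).eval ((m : ℝ) - 1 / 2) =
      Ring.choose (-(1 / 2) : ℝ) m * (2 * m)! / 4 ^ m := by
  induction m with
  | zero => simp
  | succ m ih =>
    rw [show 2 * (m + 1) = (2 * m + 1) + 1 by ring, descPochhammer_succ_left, eval_mul, eval_X,
      eval_comp, eval_sub, eval_X, eval_one, descPochhammer_succ_eval,
      show ((m + 1 : ℕ) : ℝ) - 1 / 2 - 1 = m - 1 / 2 by push_cast; ring, ih,
      Nat.factorial_succ, Nat.factorial_succ, choose_neg_half_succ]
    push_cast
    field_simp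
    ring

lemma Q_two_two_mul (m : ℕ) :
    Q 2 (2 * m) 3 = Ring.choose (-(1 / 2) : ℝ) m * (2 * m)! / 4 ^ m := by
  rw [Q_two_eq_eval_derivative, show (((2 * m : ℕ) : ℝ) - 1) / 2 = m - 1 / 2 by push_cast; ring,
    eval_derivative_descPochhammer_two_mul_add_one, descPochhammer_eval_two_mul_sub_half]

lemma Q_two_two_mul_add_three (j : ℕ) :
    Q 2 (2 * j + 3) 3 = (-1) ^ j * (j + 1)! * (j + 2)! := by
  rw [Q_two_eq_eval_derivative, show 2 * j + 3 + 1 = 2 * j + 4 by ring,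
    show (((2 * j + 3 : ℕ) : ℝ) - 1) / 2 = j + 1 by push_cast; ring,
    eval_derivative_descPochhammer_two_mul_add_four]

noncomputable def arsinhDivSqrtCoeff (n : ℕ) : ℝ := (-4) ^ n * (n ! : ℝ) ^ 2 / (2 * n + 1)!

lemma arsinhDivSqrtCoeff_succ (n : ℕ) :
    arsinhDivSqrtCoeff (n + 1) = -((2 * n + 2) / (2 * n + 3)) * arsinhDivSqrtCoeff n := by
  simp only [arsinhDivSqrtCoeff, show 2 * (n + 1) + 1 = (2 * n + 1) + 1 + 1 by ring,
    Nat.factorial_succ]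
  push_cast
  field_simp
  ring

lemma abs_arsinhDivSqrtCoeff_le_one (n : ℕ) : |arsinhDivSqrtCoeff n| ≤ 1 := by
  induction n with
  | zero => simp [arsinhDivSqrtCoeff]
  | succ n ih =>
    rw [arsinhDivSqrtCoeff_succ, abs_mul, abs_neg, abs_of_nonneg (by positivity)]
    have hratio : (2 * n + 2 : ℝ) / (2 * n + 3) ≤ 1 := by
      rw [div_le_one (by positivity)]
      linarith
    nlinarith [abs_nonneg (arsinhDivSqrtCoeff n)]

lemma Q_two_two_mul_term (m : ℕ) (t : ℝ) :
    Q 2 (2 * m) 3 * (2 * t) ^ (2 * m + 2) / (2 * m + 2)! =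
      4 * Ring.choose (-(1 / 2) : ℝ) m / ((2 * m + 1) * (2 * m + 2)) * t ^ (2 * m + 2) := by
  rw [Q_two_two_mul, Nat.factorial_succ, Nat.factorial_succ, mul_pow,
    show (2 : ℝ) ^ (2 * m + 2) = 4 * 4 ^ m by rw [pow_add, pow_mul]; norm_num; ring]
  push_cast
  field_simp
  ring

lemma Q_two_two_mul_add_three_term (j : ℕ) (t : ℝ) :
    Q 2 (2 * j + 3) 3 * (2 * t) ^ (2 * j + 5) / (2 * j + 5)! =
      -4 * (arsinhDivSqrtCoeff (j + 2) + arsinhDivSqrtCoeff (j + 1)) * t ^ (2 * j + 5) := by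
  have hfac : ((2 * j + 5)! : ℝ) = (2 * j + 5) * (2 * j + 4) * (2 * j + 3)! := by
    rw [show 2 * j + 5 = (2 * j + 3) + 1 + 1 by ring, Nat.factorial_succ, Nat.factorial_succ]
    push_cast
    ring
  have hpow : (2 * t) ^ (2 * j + 5) = 2 * 4 ^ (j + 2) * t ^ (2 * j + 5) := by
    rw [mul_pow, show 2 * j + 5 = 2 * (j + 2) + 1 by ring, pow_succ, pow_mul]
    ring
  rw [Q_two_two_mul_add_three, arsinhDivSqrtCoeff_succ (j + 1), arsinhDivSqrtCoeff,
    show 2 * (j + 1) + 1 = 2 * j + 3 by ring, hfac, hpow, Nat.factorial_succ (j + 1), neg_pow 4]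
  push_cast
  field_simp
  ring

section OddPowerSeries

variable {c : ℕ → ℝ} {C : ℝ}

lemma summable_two_mul_add_one_mul_pow_two_mul {r : ℝ} (hr : |r| < 1) :
    Summable fun n : ℕ => (2 * n + 1) * r ^ (2 * n) := by
  have hr2 : ‖r ^ 2‖ < 1 := by
    rw [norm_pow, Real.norm_eq_abs, sq_lt_one_iff_abs_lt_one, abs_abs]
    exact hr
  have h := ((summable_pow_mul_geometric_of_norm_lt_one 1 hr2).mul_left 2).add
    (summable_geometric_of_norm_lt_one hr2)
  refine h.congr fun n => ?_
  rw [pow_mul]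
  ring

lemma norm_two_mul_add_one_mul_mul_pow_le (hc : ∀ n, |c n| ≤ C) {x r : ℝ} (hxr : |x| ≤ r)
    (n : ℕ) : ‖(2 * n + 1) * c n * x ^ (2 * n)‖ ≤ C * ((2 * n + 1) * r ^ (2 * n)) := by
  rw [Real.norm_eq_abs, abs_mul, abs_mul, abs_pow,
    abs_of_nonneg (by positivity : (0 : ℝ) ≤ 2 * n + 1)]
  have hpow : |x| ^ (2 * n) ≤ r ^ (2 * n) := pow_le_pow_left₀ (abs_nonneg x) hxr _
  have hC : 0 ≤ C := (abs_nonneg _).trans (hc 0)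
  calc (2 * n + 1) * |c n| * |x| ^ (2 * n) ≤ (2 * n + 1) * C * r ^ (2 * n) := by
        gcongr
        exact hc n
    _ = C * ((2 * n + 1) * r ^ (2 * n)) := by ring

lemma summable_two_mul_add_one_mul_mul_pow (hc : ∀ n, |c n| ≤ C) {y : ℝ} (hy : |y| < 1) :
    Summable fun n : ℕ => (2 * n + 1) * c n * y ^ (2 * n) :=
  .of_norm_bounded ((summable_two_mul_add_one_mul_pow_two_mul (by rwa [abs_abs])).mul_left C)
    (norm_two_mul_add_one_mul_mul_pow_le hc le_rfl)

lemma summable_mul_pow_two_mul_add_one (hc : ∀ n, |c n| ≤ C) {y : ℝ} (hy : |y| < 1) :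
    Summable fun n : ℕ => c n * y ^ (2 * n + 1) := by
  refine .of_norm_bounded (summable_two_mul_add_one_mul_mul_pow hc hy).norm fun n => ?_
  have hn : (1 : ℝ) ≤ ‖(2 * n + 1 : ℝ)‖ := by
    rw [Real.norm_of_nonneg (by positivity)]
    linarith [(Nat.cast_nonneg n : (0 : ℝ) ≤ n)]
  calc ‖c n * y ^ (2 * n + 1)‖ = ‖c n * y ^ (2 * n)‖ * |y| := by
        rw [pow_succ, ← mul_assoc, norm_mul, Real.norm_eq_abs y]
    _ ≤ ‖c n * y ^ (2 * n)‖ := mul_le_of_le_one_right (norm_nonneg _) hy.le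
    _ ≤ ‖(2 * n + 1 : ℝ)‖ * ‖c n * y ^ (2 * n)‖ :=
        le_mul_of_one_le_left (norm_nonneg _) hn
    _ = ‖(2 * n + 1) * c n * y ^ (2 * n)‖ := by rw [← norm_mul, mul_assoc]

lemma hasDerivAt_tsum_mul_pow_two_mul_add_one (hc : ∀ n, |c n| ≤ C) {y : ℝ} (hy : |y| < 1) :
    HasDerivAt (fun x => ∑' n, c n * x ^ (2 * n + 1))
      (∑' n, (2 * n + 1) * c n * y ^ (2 * n)) y := by
  obtain ⟨r, hyr, hr1⟩ := exists_between hy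
  have hr0 : 0 ≤ r := (abs_nonneg y).trans hyr.le
  refine hasDerivAt_tsum_of_isPreconnected (t := Metric.ball (0 : ℝ) r) (y₀ := 0)
    (g := fun n x => c n * x ^ (2 * n + 1)) (g' := fun n x => (2 * n + 1) * c n * x ^ (2 * n))
    ((summable_two_mul_add_one_mul_pow_two_mul (by rwa [abs_of_nonneg hr0])).mul_left C)
    Metric.isOpen_ball (convex_ball 0 r).isPreconnected (fun n x _ => ?_) (fun n x hx => ?_)
    (Metric.mem_ball_self (hyr.trans_le' (abs_nonneg y))) (by simp) (by simpa using hyr)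
  · refine ((hasDerivAt_pow (2 * n + 1) x).const_mul (c n)).congr_deriv ?_
    push_cast
    ring
  · exact norm_two_mul_add_one_mul_mul_pow_le hc (le_of_lt (by simpa using hx)) n

end OddPowerSeries

lemma apply_eq_apply_zero_of_hasDerivAt_zero {f : ℝ → ℝ}
    (hf : ∀ x, |x| < 1 → HasDerivAt f 0 x) {y : ℝ} (hy : |y| < 1) : f y = f 0 := by
  have hball : ∀ x ∈ Metric.ball (0 : ℝ) 1, HasDerivAt f 0 x :=
    fun x hx => hf x (by simpa using hx)
  exact Metric.isOpen_ball.is_const_of_deriv_eq_zero (convex_ball 0 1).isPreconnected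
    (fun x hx => (hball x hx).differentiableAt.differentiableWithinAt)
    (fun x hx => (hball x hx).deriv) (by simpa using hy) (Metric.mem_ball_self one_pos)

lemma hasSum_choose_mul_pow (a : ℝ) {x : ℝ} (hx : |x| < 1) :
    HasSum (fun n => Ring.choose a n * x ^ n) ((1 + x) ^ a) := by
  have hx' : x ∈ Metric.eball (0 : ℝ) 1 := by
    rw [Metric.mem_eball, edist_zero_right, ← ofReal_norm, ENNReal.ofReal_lt_one]
    exact hx
  have h := one_add_rpow_hasFPowerSeriesOnBall_zero (a := a) |>.hasSum hx'
  simpa [binomialSeries, FormalMultilinearSeries.coeff_ofScalars, mul_comm] using h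

lemma hasSum_choose_mul_pow_two_mul (a : ℝ) {y : ℝ} (hy : |y| < 1) :
    HasSum (fun n => Ring.choose a n * y ^ (2 * n)) ((1 + y ^ 2) ^ a) := by
  have hy2 : |y ^ 2| < 1 := by rwa [abs_pow, sq_lt_one_iff_abs_lt_one, abs_abs]
  simpa only [pow_mul] using hasSum_choose_mul_pow a hy2

lemma hasDerivAt_sqrt_one_add_sq (x : ℝ) :
    HasDerivAt (fun x => √(1 + x ^ 2)) (x / √(1 + x ^ 2)) x := by
  have h := ((hasDerivAt_pow 2 x).const_add 1).sqrt (by positivity)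
  exact h.congr_deriv (by push_cast; ring)

lemma hasSum_arsinh {y : ℝ} (hy : |y| < 1) :
    HasSum (fun n => Ring.choose (-(1 / 2) : ℝ) n / (2 * n + 1) * y ^ (2 * n + 1))
      (arsinh y) := by
  have hc : ∀ n : ℕ, |Ring.choose (-(1 / 2) : ℝ) n / (2 * n + 1)| ≤ 1 := fun n => by
    rw [abs_div, abs_of_pos (by positivity : (0 : ℝ) < 2 * n + 1), div_le_one (by positivity)]
    linarith [abs_choose_neg_half_le_one n, (Nat.cast_nonneg n : (0 : ℝ) ≤ n)]
  have hderiv : ∀ x, |x| < 1 → HasDerivAt (fun x =>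
      ∑' n, Ring.choose (-(1 / 2) : ℝ) n / (2 * n + 1) * x ^ (2 * n + 1) - arsinh x) 0 x := by
    intro x hx
    have hsum : ∑' n : ℕ, (2 * n + 1) * (Ring.choose (-(1 / 2) : ℝ) n / (2 * n + 1)) *
        x ^ (2 * n) = (√(1 + x ^ 2))⁻¹ := by
      rw [sqrt_eq_rpow, ← rpow_neg (by positivity),
        ← (hasSum_choose_mul_pow_two_mul _ hx).tsum_eq]
      exact tsum_congr fun n => by field_simp
    have h := (hasDerivAt_tsum_mul_pow_two_mul_add_one hc hx).sub (hasDerivAt_arsinh x)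
    rwa [hsum, sub_self] at h
  have h := apply_eq_apply_zero_of_hasDerivAt_zero hderiv hy
  simp only [ne_eq, add_eq_zero, one_ne_zero, and_false, not_false_eq_true, zero_pow, mul_zero,
    tsum_zero, arsinh_zero, sub_zero, sub_eq_zero] at h
  exact h ▸ (summable_mul_pow_two_mul_add_one hc hy).hasSum

lemma hasSum_mul_arsinh_sub_sqrt_one_add_sq {t : ℝ} (ht : |t| < 1) :
    HasSum (fun m : ℕ =>
        4 * Ring.choose (-(1 / 2) : ℝ) m / ((2 * m + 1) * (2 * m + 2)) * t ^ (2 * m + 2))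
      (4 * (t * arsinh t - √(1 + t ^ 2) + 1)) := by
  have hsqrt : HasSum (fun m : ℕ => Ring.choose (1 / 2 : ℝ) (m + 1) * t ^ (2 * (m + 1)))
      (√(1 + t ^ 2) - 1) := by
    have h := (hasSum_nat_add_iff' 1).mpr (hasSum_choose_mul_pow_two_mul (1 / 2) ht)
    rwa [← sqrt_eq_rpow, sum_range_one, Ring.choose_zero_right, mul_zero, pow_zero, mul_one] at h
  rw [show 4 * (t * arsinh t - √(1 + t ^ 2) + 1) = 4 * t * arsinh t - 4 * (√(1 + t ^ 2) - 1) by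
    ring]
  refine (((hasSum_arsinh ht).mul_left (4 * t)).sub (hsqrt.mul_left 4)).congr_fun fun m => ?_
  rw [choose_half_succ]
  field_simp
  ring

lemma one_add_sq_mul_tsum_add_mul_tsum_arsinhDivSqrtCoeff {y : ℝ} (hy : |y| < 1) :
    (1 + y ^ 2) * ∑' n : ℕ, (2 * n + 1) * arsinhDivSqrtCoeff n * y ^ (2 * n) +
      y * ∑' n : ℕ, arsinhDivSqrtCoeff n * y ^ (2 * n + 1) = 1 := by
  have hD' := (summable_two_mul_add_one_mul_mul_pow abs_arsinhDivSqrtCoeff_le_one hy).hasSum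
  have hD := (summable_mul_pow_two_mul_add_one abs_arsinhDivSqrtCoeff_le_one hy).hasSum
  have hshift := (hasSum_nat_add_iff' 1).mpr hD'
  rw [sum_range_one, show (2 * ((0 : ℕ) : ℝ) + 1) * arsinhDivSqrtCoeff 0 * y ^ (2 * 0) = 1 by
    simp [arsinhDivSqrtCoeff]] at hshift
  have hzero : HasSum (fun _ : ℕ => (0 : ℝ)) _ :=
    (hshift.add ((hD'.mul_left (y ^ 2)).add (hD.mul_left y))).congr_fun fun n => by
      rw [arsinhDivSqrtCoeff_succ]
      push_cast
      field_simp
      ring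
  linarith [hasSum_zero.unique hzero]

lemma hasSum_arsinhDivSqrtCoeff {y : ℝ} (hy : |y| < 1) :
    HasSum (fun n => arsinhDivSqrtCoeff n * y ^ (2 * n + 1)) (arsinh y / √(1 + y ^ 2)) := by
  have hderiv : ∀ x, |x| < 1 → HasDerivAt (fun x =>
      √(1 + x ^ 2) * ∑' n, arsinhDivSqrtCoeff n * x ^ (2 * n + 1) - arsinh x) 0 x := by
    intro x hx
    have h := ((hasDerivAt_sqrt_one_add_sq x).mul
      (hasDerivAt_tsum_mul_pow_two_mul_add_one abs_arsinhDivSqrtCoeff_le_one hx)).sub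
      (hasDerivAt_arsinh x)
    refine h.congr_deriv ?_
    have hode := one_add_sq_mul_tsum_add_mul_tsum_arsinhDivSqrtCoeff hx
    have hs : 0 < √(1 + x ^ 2) := sqrt_pos.2 (by positivity)
    rw [← sq_sqrt (by positivity : (0 : ℝ) ≤ 1 + x ^ 2)] at hode
    field_simp
    linear_combination hode
  have h := apply_eq_apply_zero_of_hasDerivAt_zero hderiv hy
  simp only [ne_eq, add_eq_zero, one_ne_zero, and_false, not_false_eq_true, zero_pow, mul_zero,
    tsum_zero, arsinh_zero, sub_zero, sub_eq_zero] at h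
  rw [← h, mul_div_cancel_left₀ _ (sqrt_pos.2 (by positivity)).ne']
  exact (summable_mul_pow_two_mul_add_one abs_arsinhDivSqrtCoeff_le_one hy).hasSum

lemma hasSum_arsinh_mul_sqrt_one_add_sq {t : ℝ} (ht : |t| < 1) :
    HasSum (fun j : ℕ => -4 * (arsinhDivSqrtCoeff (j + 2) + arsinhDivSqrtCoeff (j + 1)) *
      t ^ (2 * j + 5)) (-4 * (arsinh t * √(1 + t ^ 2)) + 4 * t + 4 / 3 * t ^ 3) := by
  have hD := hasSum_arsinhDivSqrtCoeff ht
  have h := (((hasSum_nat_add_iff' 2).mpr hD).add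
    (((hasSum_nat_add_iff' 1).mpr hD).mul_left (t ^ 2))).mul_left (-4)
  have hdiv : arsinh t / √(1 + t ^ 2) * (1 + t ^ 2) = arsinh t * √(1 + t ^ 2) := by
    rw [div_mul_eq_mul_div, div_eq_iff (sqrt_pos.2 (by positivity)).ne', mul_assoc,
      mul_self_sqrt (by positivity)]
  have hhead₂ :
      ∑ i ∈ range 2, arsinhDivSqrtCoeff i * t ^ (2 * i + 1) = t - 2 / 3 * t ^ 3 := by
    simp [sum_range_succ, arsinhDivSqrtCoeff, Nat.factorial]
    ring
  have hhead₁ : ∑ i ∈ range 1, arsinhDivSqrtCoeff i * t ^ (2 * i + 1) = t := by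
    simp [arsinhDivSqrtCoeff]
  rw [hhead₂, hhead₁] at h
  rw [show -4 * (arsinh t * √(1 + t ^ 2)) + 4 * t + 4 / 3 * t ^ 3 =
      -4 * (arsinh t / √(1 + t ^ 2) - (t - 2 / 3 * t ^ 3) +
        t ^ 2 * (arsinh t / √(1 + t ^ 2) - t)) by
    linear_combination 4 * hdiv]
  exact h.congr_fun fun j => by ring

lemma hasSum_Q_two_two_mul_add_two {t : ℝ} (ht : |t| < 1) :
    HasSum (fun j : ℕ => Q 2 (2 * j + 2) 3 * (2 * t) ^ (2 * j + 4) / (2 * j + 4)!)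
      (4 * (t * arsinh t - √(1 + t ^ 2) + 1) - 2 * t ^ 2) := by
  have h := (hasSum_nat_add_iff' 1).mpr (hasSum_mul_arsinh_sub_sqrt_one_add_sq ht)
  rw [sum_range_one, show 4 * Ring.choose (-(1 / 2) : ℝ) 0 / ((2 * ((0 : ℕ) : ℝ) + 1) *
    (2 * ((0 : ℕ) : ℝ) + 2)) * t ^ (2 * 0 + 2) = 2 * t ^ 2 by norm_num] at h
  refine h.congr_fun fun j => ?_
  rw [show 2 * j + 2 = 2 * (j + 1) by ring, show 2 * j + 4 = 2 * (j + 1) + 2 by ring,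
    Q_two_two_mul_term]

lemma hasSum_Q_two_two_mul_add_three {t : ℝ} (ht : |t| < 1) :
    HasSum (fun j : ℕ => Q 2 (2 * j + 3) 3 * (2 * t) ^ (2 * j + 5) / (2 * j + 5)!)
      (-4 * (arsinh t * √(1 + t ^ 2)) + 4 * t + 4 / 3 * t ^ 3) :=
  (hasSum_arsinh_mul_sqrt_one_add_sq ht).congr_fun fun j => Q_two_two_mul_add_three_term j t

/-- `Γ(2, arcsinh t) = 1 − t²/2 + t³/3 − (1/4) ∑_{k=3}^∞ Q(2, k−1; 3) (2t)^{k+1}/(k+1)!`. -/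
theorem incGamma_two_arsinh (t : ℝ) (ht : |t| < 1) :
    ∃ S : ℝ,
      HasSum (fun k : ℕ =>
        Q 2 (k + 3 - 1) 3 * (2 * t) ^ (k + 3 + 1) / ((k + 3 + 1).factorial : ℝ)) S ∧
      incGamma 2 (Real.arsinh t) = 1 - t ^ 2 / 2 + t ^ 3 / 3 - 1 / 4 * S := by
  refine ⟨_, (hasSum_Q_two_two_mul_add_two ht).even_add_odd
    (hasSum_Q_two_two_mul_add_three ht), ?_⟩
  rw [incGamma_two_eq, exp_neg_arsinh]
  ring
end

section
/- For every positive integer n and every real number t with |t| < 1, one has the convergent Maclaurin series expansion (arctanh t)^n = n! · Σ_{k=0}^∞ S_{n−1}(k) · t^{2k+n}/(2k+n), where arctanh t = (1/2)·ln((1+t)/(1−t)) is the inverse hyperbolic tangent and the nested harmonic-type sums S_m(j) are defined by S_0(j) = 1 and S_m(j) = Σ_{i=0}^{j} S_{m−1}(i)/(2i+m) for m ≥ 1. -/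
/-!
Put `F m t = ∑ₖ S_m(k) t^(2k+m)` and `G m t = ∑ₖ S_m(k) t^(2k+m+1)/(2k+m+1)`. Since
`S_m(k) ≤ (k+m choose m)`, both converge absolutely on `(-1, 1)` and `G m` differentiates
termwise to `F m`. `F 0 = 1/(1-t²)` is a geometric series, and because
`S_{m+1}(k) - S_{m+1}(k-1) = S_m(k)/(2k+m+1)`, summation by parts gives `(1-t²) F (m+1) = G m`.
Inductively `F m = artanh^m / (m! (1-t²))`; as `artanh' = 1/(1-t²)`, the functions `G m` and
`artanh^(m+1)/(m+1)!` then have the same derivative and both vanish at `0`.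
-/

noncomputable def nestedS : ℕ → ℕ → ℝ
  | 0, _ => 1
  | m + 1, j => ∑ i ∈ Finset.range (j + 1), nestedS m i / (2 * (i : ℝ) + ((m : ℝ) + 1))

open Finset Real
open scoped Nat

lemma nestedS_nonneg (m k : ℕ) : 0 ≤ nestedS m k := by
  induction m generalizing k with
  | zero => simp [nestedS]
  | succ m ih => exact sum_nonneg fun i _ => div_nonneg (ih i) (by positivity)

lemma nestedS_le_choose (m k : ℕ) : nestedS m k ≤ (k + m).choose m := by
  induction m generalizing k with
  | zero => simp [nestedS]
  | succ m ih =>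
    calc nestedS (m + 1) k ≤ ∑ i ∈ range (k + 1), ((i + m).choose m : ℝ) :=
          sum_le_sum fun i _ => by
            refine (div_le_self (nestedS_nonneg m i) ?_).trans (ih i)
            linarith [i.cast_nonneg (α := ℝ)]
      _ = (k + (m + 1)).choose (m + 1) := by
          rw [← Nat.cast_sum, Nat.sum_range_add_choose, add_assoc]

lemma nestedS_succ_zero (m : ℕ) : nestedS (m + 1) 0 = nestedS m 0 / (m + 1) := by
  simp [nestedS]

lemma nestedS_succ_succ (m k : ℕ) :
    nestedS (m + 1) (k + 1) = nestedS (m + 1) k + nestedS m (k + 1) / (2 * k + m + 3) := by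
  rw [nestedS, nestedS, sum_range_succ]
  congr 1
  push_cast
  ring

lemma summable_choose_mul_pow (m c : ℕ) {r : ℝ} (hr : |r| < 1) :
    Summable fun k : ℕ => ((k + m).choose m : ℝ) * r ^ (2 * k + c) := by
  have hr2 : ‖r ^ 2‖ < 1 := by
    rw [norm_pow, norm_eq_abs]
    exact pow_lt_one₀ (abs_nonneg r) hr two_ne_zero
  refine ((summable_choose_mul_geometric_of_norm_lt_one m hr2).mul_right (r ^ c)).congr fun k => ?_
  rw [pow_add, pow_mul, mul_assoc]

lemma norm_nestedS_mul_pow_le (m k c : ℕ) {x r : ℝ} (hxr : |x| ≤ r) :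
    ‖nestedS m k * x ^ (2 * k + c)‖ ≤ (k + m).choose m * r ^ (2 * k + c) := by
  rw [norm_mul, norm_pow, norm_of_nonneg (nestedS_nonneg m k), norm_eq_abs]
  gcongr
  exact nestedS_le_choose m k

lemma summable_nestedS_mul_pow (m c : ℕ) {x : ℝ} (hx : |x| < 1) :
    Summable fun k : ℕ => nestedS m k * x ^ (2 * k + c) :=
  .of_norm_bounded (summable_choose_mul_pow m c (by rwa [abs_abs])) fun k =>
    norm_nestedS_mul_pow_le m k c le_rfl

lemma summable_nestedS_mul_pow_div (m : ℕ) {x : ℝ} (hx : |x| < 1) :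
    Summable fun k : ℕ => nestedS m k * x ^ (2 * k + m + 1) / (2 * k + m + 1 : ℕ) := by
  refine .of_norm_bounded (summable_choose_mul_pow m (m + 1) (by rwa [abs_abs])) fun k => ?_
  rw [norm_div]
  refine (div_le_self (norm_nonneg _) ?_).trans (norm_nestedS_mul_pow_le m k (m + 1) le_rfl)
  rw [norm_natCast]
  exact Nat.one_le_cast.2 (Nat.succ_pos _)

noncomputable def nestedSeries (m : ℕ) (t : ℝ) : ℝ :=
  ∑' k : ℕ, nestedS m k * t ^ (2 * k + m)

noncomputable def nestedPrimitive (m : ℕ) (t : ℝ) : ℝ :=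
  ∑' k : ℕ, nestedS m k * t ^ (2 * k + m + 1) / (2 * k + m + 1 : ℕ)

lemma nestedSeries_zero {t : ℝ} (ht : |t| < 1) : nestedSeries 0 t = (1 - t ^ 2)⁻¹ := by
  rw [← tsum_geometric_of_lt_one (sq_nonneg t) (by nlinarith [abs_lt.1 ht])]
  exact tsum_congr fun k => by simp [nestedS, pow_mul]

lemma one_sub_sq_mul_nestedSeries_succ (m : ℕ) {x : ℝ} (hx : |x| < 1) :
    (1 - x ^ 2) * nestedSeries (m + 1) x = nestedPrimitive m x := by
  set a : ℕ → ℝ := fun k => nestedS (m + 1) k * x ^ (2 * k + m + 1)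
  have ha : Summable a := summable_nestedS_mul_pow (m + 1) (m + 1) hx
  have h0 : nestedS m 0 * x ^ (2 * 0 + m + 1) / (2 * 0 + m + 1 : ℕ) = a 0 := by
    simp only [a, nestedS_succ_zero]
    push_cast
    ring
  have hsucc : ∀ k, nestedS m (k + 1) * x ^ (2 * (k + 1) + m + 1) / (2 * (k + 1) + m + 1 : ℕ)
      = a (k + 1) - x ^ 2 * a k := fun k => by
    simp only [a, nestedS_succ_succ]
    push_cast
    ring
  calc (1 - x ^ 2) * nestedSeries (m + 1) x = ∑' k, a k - ∑' k, x ^ 2 * a k := by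
        rw [one_sub_mul, ha.tsum_mul_left]
        rfl
    _ = a 0 + ∑' k, (a (k + 1) - x ^ 2 * a k) := by
        rw [ha.tsum_eq_zero_add, add_sub_assoc,
          ((summable_nat_add_iff 1).2 ha).tsum_sub (ha.mul_left _)]
    _ = nestedPrimitive m x := by
        rw [nestedPrimitive, (summable_nestedS_mul_pow_div m hx).tsum_eq_zero_add, h0]
        simp only [hsucc]

lemma hasDerivAt_nestedPrimitive (m : ℕ) {t : ℝ} (ht : |t| < 1) :
    HasDerivAt (nestedPrimitive m) (nestedSeries m t) t := by
  obtain ⟨r, htr, hr⟩ := exists_between ht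
  have hr' : |r| < 1 := by rwa [abs_of_pos ((abs_nonneg t).trans_lt htr)]
  have ht' : t ∈ Metric.ball 0 r := by rwa [mem_ball_zero_iff, norm_eq_abs]
  have hterm : ∀ k y,
      HasDerivAt (fun y => nestedS m k * y ^ (2 * k + m + 1) / (2 * k + m + 1 : ℕ))
        (nestedS m k * y ^ (2 * k + m)) y := fun k y => by
    have := ((hasDerivAt_pow (2 * k + m + 1) y).const_mul (nestedS m k)).div_const
      ((2 * k + m + 1 : ℕ) : ℝ)
    rwa [Nat.add_sub_cancel, mul_div_assoc, mul_div_cancel_left₀ _ (by positivity)] at this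
  have hbound : ∀ k, ∀ y ∈ Metric.ball 0 r,
      ‖nestedS m k * y ^ (2 * k + m)‖ ≤ (k + m).choose m * r ^ (2 * k + m) := fun k y hy => by
    rw [mem_ball_zero_iff, norm_eq_abs] at hy
    exact norm_nestedS_mul_pow_le m k m hy.le
  exact hasDerivAt_tsum_of_isPreconnected (summable_choose_mul_pow m m hr') Metric.isOpen_ball
    (convex_ball 0 r).isPreconnected (fun k y _ => hterm k y) hbound ht'
    (summable_nestedS_mul_pow_div m ht) ht'

lemma Real.hasDerivAt_artanh {x : ℝ} (hx : x ∈ Set.Ioo (-1) 1) :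
    HasDerivAt artanh (1 - x ^ 2)⁻¹ x := by
  obtain ⟨hx₁, hx₂⟩ := hx
  have hlog : HasDerivAt (fun y => 1 / 2 * (log (1 + y) - log (1 - y)))
      (1 / 2 * (1 / (1 + x) - -1 / (1 - x))) x :=
    ((((hasDerivAt_id' x).const_add 1).log (by linarith)).sub
      (((hasDerivAt_id' x).const_sub 1).log (by linarith))).const_mul _
  refine (hlog.congr_deriv ?_).congr_of_eventuallyEq ?_
  · have h₁ : 1 + x ≠ 0 := by linarith
    have h₂ : 1 - x ≠ 0 := by linarith
    rw [show 1 - x ^ 2 = (1 + x) * (1 - x) by ring]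
    field_simp
    ring
  filter_upwards [Ioo_mem_nhds hx₁ hx₂] with y ⟨hy₁, hy₂⟩
  rw [artanh_eq_half_log ⟨hy₁.le, hy₂.le⟩, log_div (by linarith) (by linarith)]

lemma nestedPrimitive_eqOn_of_nestedSeries_eqOn (m : ℕ)
    (h : Set.EqOn (nestedSeries m) (fun t => artanh t ^ m / m ! / (1 - t ^ 2)) (Set.Ioo (-1) 1)) :
    Set.EqOn (nestedPrimitive m) (fun t => artanh t ^ (m + 1) / (m + 1)!) (Set.Ioo (-1) 1) := by
  have hG : ∀ t ∈ Set.Ioo (-1 : ℝ) 1, HasDerivAt (nestedPrimitive m) (nestedSeries m t) t :=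
    fun t ht => hasDerivAt_nestedPrimitive m (abs_lt.2 ht)
  have hA : ∀ t ∈ Set.Ioo (-1 : ℝ) 1,
      HasDerivAt (fun t => artanh t ^ (m + 1) / (m + 1)!) (nestedSeries m t) t := fun t ht => by
    refine (((hasDerivAt_artanh ht).fun_pow (m + 1)).div_const ((m + 1)! : ℝ)).congr_deriv ?_
    have : (m ! : ℝ) ≠ 0 := by positivity
    rw [h ht, Nat.add_sub_cancel, Nat.factorial_succ]
    push_cast
    field_simp
  refine isOpen_Ioo.eqOn_of_deriv_eq isPreconnected_Ioo
    (fun t ht => (hG t ht).differentiableAt.differentiableWithinAt)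
    (fun t ht => (hA t ht).differentiableAt.differentiableWithinAt)
    (fun t ht => (hG t ht).deriv.trans (hA t ht).deriv.symm) (x := 0) (by norm_num) ?_
  simp [nestedPrimitive]

lemma nestedSeries_eqOn (m : ℕ) :
    Set.EqOn (nestedSeries m) (fun t => artanh t ^ m / m ! / (1 - t ^ 2)) (Set.Ioo (-1) 1) := by
  induction m with
  | zero => exact fun t ht => by simp [nestedSeries_zero (abs_lt.2 ht)]
  | succ m ih =>
    intro t ht
    have hpos : 0 < 1 - t ^ 2 := by nlinarith [ht.1, ht.2]
    rw [eq_div_iff hpos.ne', mul_comm, one_sub_sq_mul_nestedSeries_succ m (abs_lt.2 ht),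
      nestedPrimitive_eqOn_of_nestedSeries_eqOn m ih ht]

/-- Maclaurin series for `(arctanh t)^n` where `arctanh t = (1/2) ln((1+t)/(1−t))`:
`(arctanh t)^n = n! ∑_{k=0}^∞ S_{n−1}(k) t^{2k+n}/(2k+n)`. -/
theorem artanh_pow_maclaurin (n : ℕ) (hn : 1 ≤ n) (t : ℝ) (ht : |t| < 1) :
    ∃ S : ℝ,
      HasSum (fun k : ℕ =>
        nestedS (n - 1) k * t ^ (2 * k + n) / ((2 * k + n : ℕ) : ℝ)) S ∧
      (1 / 2 * Real.log ((1 + t) / (1 - t))) ^ n = (n.factorial : ℝ) * S := by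
  obtain ⟨m, rfl⟩ : ∃ m, n = m + 1 := ⟨n - 1, by omega⟩
  have ht' : t ∈ Set.Ioo (-1) 1 := abs_lt.1 ht
  refine ⟨nestedPrimitive m t, (summable_nestedS_mul_pow_div m ht).hasSum, ?_⟩
  rw [← artanh_eq_half_log (Set.Ioo_subset_Icc_self ht'),
    nestedPrimitive_eqOn_of_nestedSeries_eqOn m (nestedSeries_eqOn m) ht']
  field_simp
end
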